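/- For any n ≥ 1, any σ ∈ Ω_n, and any x, y ∈ J, one has ξ^{-1} |φ'_σ(y)| ≤ |φ'_σ(x)| ≤ ξ |φ'_σ(y)|. -/

import Mathlib

open MeasureTheory Filter Metric

noncomputable section

/-- A cookie-cutter system on `J = [0,1]`. -/
structure CookieCutter where
  N : ℕ
  hN : 2 ≤ N
  Jsub : Fin N → Set ℝ
  f : ℝ → ℝ
  φ : Fin N → ℝ → ℝ
  c : ℝ
  γ : ℝ
  b : ℝ
  B : ℝ
  hJsub_sub : ∀ j, Jsub j ⊆ Set.Icc 0 1
  hJsub_interval : ∀ j, ∃ u v : ℝ, u ≤ v ∧ Jsub j = Set.Icc u v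
  hJsub_disj : ∀ i j, i ≠ j → Disjoint (Jsub i) (Jsub j)
  hbij : ∀ j, Set.BijOn f (Jsub j) (Set.Icc 0 1)
  hφ_maps : ∀ j, ∀ x ∈ Set.Icc (0:ℝ) 1, φ j x ∈ Jsub j
  hφ_rinv : ∀ j, ∀ x ∈ Set.Icc (0:ℝ) 1, f (φ j x) = x
  hφ_linv : ∀ j, ∀ x ∈ Jsub j, φ j (f x) = x
  hfdiff : ∀ j, ∀ x ∈ Jsub j, DifferentiableAt ℝ f x
  hφdiff : ∀ j, ∀ x ∈ Set.Icc (0:ℝ) 1, DifferentiableAt ℝ (φ j) x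
  hc : 0 < c
  hγ : γ ∈ Set.Ioc (0:ℝ) 1
  hHolder : ∀ j, ∀ x ∈ Jsub j, ∀ y ∈ Jsub j, |deriv f x - deriv f y| ≤ c * |x - y| ^ γ
  hb : IsGLB ((fun x => |deriv f x|) '' ⋃ j, Jsub j) b
  hB : IsLUB ((fun x => |deriv f x|) '' ⋃ j, Jsub j) B
  hb1 : 1 < b

namespace CookieCutter

variable (cc : CookieCutter)

/-- `φ_σ = φ_{σ_1} ∘ ⋯ ∘ φ_{σ_n}` for a word `σ`. -/
def wordMap : List (Fin cc.N) → ℝ → ℝ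
  | [] => id
  | j :: rest => cc.φ j ∘ wordMap rest

/-- The basic interval `J_σ = φ_σ(J)`. -/
def Jc (σ : List (Fin cc.N)) : Set ℝ := cc.wordMap σ '' Set.Icc 0 1

/-- The diameter `|J_σ|`. -/
def diamJ (σ : List (Fin cc.N)) : ℝ := Metric.diam (cc.Jc σ)

/-- `‖φ'_σ‖ = sup_{x ∈ J} |φ'_σ(x)|`. -/
def φnorm (σ : List (Fin cc.N)) : ℝ :=
  sSup ((fun x => |deriv (cc.wordMap σ) x|) '' Set.Icc 0 1)

/-- The distortion constant `ξ = exp (c / (b^γ − 1))`. -/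
def xi : ℝ := Real.exp (cc.c / (cc.b ^ cc.γ - 1))

/-- The cookie-cutter set `E = ⋂_{n ≥ 1} ⋃_{σ ∈ Ω_n} J_σ`. -/
def E : Set ℝ := ⋂ (n : ℕ) (_ : 1 ≤ n), ⋃ σ : Fin n → Fin cc.N, cc.Jc (List.ofFn σ)

/-- `η = ξ^{9h}`. -/
def eta (h : ℝ) : ℝ := cc.xi ^ ((9:ℝ) * h)

/-- `L = η³ ξ^{3h}`. -/
def Lconst (h : ℝ) : ℝ := (cc.eta h) ^ 3 * cc.xi ^ ((3:ℝ) * h)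

/-- A Gibbs-like measure for the cookie-cutter system: a Borel probability measure
supported on `E` with `η⁻¹|J_σ|^h ≤ μ(J_σ) ≤ η|J_σ|^h` for every word `σ`. -/
def IsGibbsLike (μ : Measure ℝ) (h : ℝ) : Prop :=
  IsProbabilityMeasure μ ∧ μ (cc.Eᶜ) = 0 ∧
    ∀ σ : List (Fin cc.N), σ ≠ [] →
      (cc.eta h)⁻¹ * cc.diamJ σ ^ h ≤ (μ (cc.Jc σ)).toReal ∧
      (μ (cc.Jc σ)).toReal ≤ cc.eta h * cc.diamJ σ ^ h

/-- A finite maximal antichain in `Ω`. -/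
def IsFMA (Γ : Finset (List (Fin cc.N))) : Prop :=
  (∀ σ ∈ Γ, σ ≠ []) ∧
  (∀ ω : ℕ → Fin cc.N, ∃ k : ℕ, 1 ≤ k ∧ (List.ofFn fun i : Fin k => ω i) ∈ Γ) ∧
  ∀ σ ∈ Γ, ∀ τ ∈ Γ, σ <+: τ → σ = τ

end CookieCutter

/-- The `n`-th quantization error of order `r`. -/
def Vnr (μ : Measure ℝ) (n : ℕ) (r : ℝ) : ℝ :=
  sInf ((fun α : Finset ℝ => ∫ x, Metric.infDist x (α : Set ℝ) ^ r ∂μ) ''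
    {α : Finset ℝ | α.Nonempty ∧ α.card ≤ n})

/-- The auxiliary quantization error `u_{n,r}` with `U = (0,1)`. -/
def unr (μ : Measure ℝ) (n : ℕ) (r : ℝ) : ℝ :=
  sInf ((fun α : Finset ℝ =>
      ∫ x, Metric.infDist x ((α : Set ℝ) ∪ (Set.Ioo (0:ℝ) 1)ᶜ) ^ r ∂μ) ''
    {α : Finset ℝ | α.card ≤ n})

/-! Bounded distortion. Differentiating `f ∘ φ_j = id` gives `|φ_j'| = 1 / |f' ∘ φ_j|`, and since
`|f'| ≥ b ≥ 1` the Hölder bound on `f'` yields `|φ_j'(u)| ≤ exp (c |φ_j u - φ_j v|^γ) |φ_j'(v)|`.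
By the chain rule `φ_σ'(x)` is a product of such factors evaluated along the orbits of `x` and `y`;
the `k`-th pair of points lies in an interval of length at most `b^{-k}`, so the ratio
`|φ_σ'(x)| / |φ_σ'(y)|` is at most `exp (c ∑_{k ≥ 1} b^{-γ k}) = exp (c / (b^γ - 1)) = ξ`. -/

lemma deriv_mul_deriv_eq_one_of_eqOn {f g : ℝ → ℝ} {s : Set ℝ} {u : ℝ}
    (hinv : Set.EqOn (f ∘ g) id s) (hs : UniqueDiffWithinAt ℝ s u) (hu : u ∈ s)
    (hf : DifferentiableAt ℝ f (g u)) (hg : DifferentiableAt ℝ g u) :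
    deriv f (g u) * deriv g u = 1 := by
  have hcomp := (hf.hasDerivAt.comp u hg.hasDerivAt).hasDerivWithinAt (s := s)
  have hid : HasDerivWithinAt (f ∘ g) 1 s u :=
    (hasDerivWithinAt_id u s).congr hinv (hinv hu)
  exact hs.eq_deriv s hcomp hid

lemma le_exp_mul_of_le_add {a b t : ℝ} (ha : 1 ≤ a) (ht : 0 ≤ t) (h : b ≤ a + t) :
    b ≤ Real.exp t * a := by
  nlinarith [Real.add_one_le_exp t]

lemma sum_Ico_one_inv_pow_le {s : ℝ} (hs : 1 < s) (n : ℕ) :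
    ∑ k ∈ Finset.Ico 1 n, s⁻¹ ^ k ≤ (s - 1)⁻¹ := by
  have hs0 : 0 < s := one_pos.trans hs
  calc ∑ k ∈ Finset.Ico 1 n, s⁻¹ ^ k ≤ s⁻¹ ^ 1 / (1 - s⁻¹) :=
        geom_sum_Ico_le_of_lt_one (inv_nonneg.2 hs0.le) (inv_lt_one_of_one_lt₀ hs)
    _ = (s - 1)⁻¹ := by field_simp

namespace CookieCutter

variable (cc : CookieCutter)

lemma b_pos : 0 < cc.b := one_pos.trans cc.hb1

lemma xi_pos : 0 < cc.xi := Real.exp_pos _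

lemma one_lt_b_rpow_γ : 1 < cc.b ^ cc.γ :=
  Real.one_lt_rpow cc.hb1 cc.hγ.1

lemma b_le_abs_deriv_f {j : Fin cc.N} {p : ℝ} (hp : p ∈ cc.Jsub j) : cc.b ≤ |deriv cc.f p| :=
  cc.hb.1 ⟨p, Set.mem_iUnion.2 ⟨j, hp⟩, rfl⟩

lemma abs_deriv_f_le_exp_mul {j : Fin cc.N} {p q : ℝ} (hp : p ∈ cc.Jsub j)
    (hq : q ∈ cc.Jsub j) :
    |deriv cc.f q| ≤ Real.exp (cc.c * |p - q| ^ cc.γ) * |deriv cc.f p| := by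
  refine le_exp_mul_of_le_add (cc.hb1.le.trans (cc.b_le_abs_deriv_f hp))
    (mul_nonneg cc.hc.le (by positivity)) ?_
  have hHolder := cc.hHolder j q hq p hp
  rw [abs_sub_comm q p] at hHolder
  linarith [abs_sub_abs_le_abs_sub (deriv cc.f q) (deriv cc.f p)]

lemma φ_mem (j : Fin cc.N) {u : ℝ} (hu : u ∈ Set.Icc (0:ℝ) 1) :
    cc.φ j u ∈ Set.Icc (0:ℝ) 1 :=
  cc.hJsub_sub j (cc.hφ_maps j u hu)

lemma abs_deriv_φ (j : Fin cc.N) {u : ℝ} (hu : u ∈ Set.Icc (0:ℝ) 1) :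
    |deriv (cc.φ j) u| = |deriv cc.f (cc.φ j u)|⁻¹ := by
  have h := deriv_mul_deriv_eq_one_of_eqOn (fun y hy => cc.hφ_rinv j y hy)
    (uniqueDiffOn_Icc one_pos u hu) hu (cc.hfdiff j _ (cc.hφ_maps j u hu)) (cc.hφdiff j u hu)
  refine eq_inv_of_mul_eq_one_right ?_
  rw [← abs_mul, h, abs_one]

lemma abs_deriv_φ_le (j : Fin cc.N) {u : ℝ} (hu : u ∈ Set.Icc (0:ℝ) 1) :
    |deriv (cc.φ j) u| ≤ cc.b⁻¹ := by
  rw [cc.abs_deriv_φ j hu]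
  exact inv_anti₀ cc.b_pos (cc.b_le_abs_deriv_f (cc.hφ_maps j u hu))

lemma abs_deriv_φ_le_exp_mul (j : Fin cc.N) {u v : ℝ} (hu : u ∈ Set.Icc (0:ℝ) 1)
    (hv : v ∈ Set.Icc (0:ℝ) 1) :
    |deriv (cc.φ j) u| ≤
      Real.exp (cc.c * |cc.φ j u - cc.φ j v| ^ cc.γ) * |deriv (cc.φ j) v| := by
  have hu' := cc.hφ_maps j u hu
  have hv' := cc.hφ_maps j v hv
  have hpos : ∀ {p}, p ∈ cc.Jsub j → 0 < |deriv cc.f p| :=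
    fun hp => cc.b_pos.trans_le (cc.b_le_abs_deriv_f hp)
  rw [cc.abs_deriv_φ j hu, cc.abs_deriv_φ j hv, ← div_eq_mul_inv, inv_eq_one_div,
    div_le_div_iff₀ (hpos hu') (hpos hv'), one_mul]
  exact cc.abs_deriv_f_le_exp_mul hu' hv'

lemma abs_φ_sub_le (j : Fin cc.N) {u v : ℝ} (hu : u ∈ Set.Icc (0:ℝ) 1)
    (hv : v ∈ Set.Icc (0:ℝ) 1) : |cc.φ j u - cc.φ j v| ≤ cc.b⁻¹ * |u - v| :=
  (convex_Icc 0 1).norm_image_sub_le_of_norm_deriv_le (cc.hφdiff j)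
    (fun _ hx => cc.abs_deriv_φ_le j hx) hv hu

lemma wordMap_mem (σ : List (Fin cc.N)) {x : ℝ} (hx : x ∈ Set.Icc (0:ℝ) 1) :
    cc.wordMap σ x ∈ Set.Icc (0:ℝ) 1 := by
  induction σ with
  | nil => exact hx
  | cons j σ ih => exact cc.φ_mem j ih

lemma differentiableAt_wordMap (σ : List (Fin cc.N)) {x : ℝ} (hx : x ∈ Set.Icc (0:ℝ) 1) :
    DifferentiableAt ℝ (cc.wordMap σ) x := by
  induction σ with
  | nil => exact differentiableAt_id
  | cons j σ ih => exact (cc.hφdiff j _ (cc.wordMap_mem σ hx)).comp x ih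

lemma deriv_wordMap_cons (j : Fin cc.N) (σ : List (Fin cc.N)) {x : ℝ}
    (hx : x ∈ Set.Icc (0:ℝ) 1) :
    deriv (cc.wordMap (j :: σ)) x =
      deriv (cc.φ j) (cc.wordMap σ x) * deriv (cc.wordMap σ) x :=
  deriv_comp x (cc.hφdiff j _ (cc.wordMap_mem σ hx)) (cc.differentiableAt_wordMap σ hx)

lemma abs_wordMap_sub_le (σ : List (Fin cc.N)) {x y : ℝ} (hx : x ∈ Set.Icc (0:ℝ) 1)
    (hy : y ∈ Set.Icc (0:ℝ) 1) :
    |cc.wordMap σ x - cc.wordMap σ y| ≤ cc.b⁻¹ ^ σ.length := by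
  induction σ with
  | nil =>
    simp only [wordMap, id, List.length_nil, pow_zero]
    exact abs_sub_le_iff.2 ⟨by linarith [hx.2, hy.1], by linarith [hx.1, hy.2]⟩
  | cons j σ ih =>
    calc |cc.φ j (cc.wordMap σ x) - cc.φ j (cc.wordMap σ y)|
        ≤ cc.b⁻¹ * |cc.wordMap σ x - cc.wordMap σ y| :=
          cc.abs_φ_sub_le j (cc.wordMap_mem σ hx) (cc.wordMap_mem σ hy)
      _ ≤ cc.b⁻¹ * cc.b⁻¹ ^ σ.length := by gcongr; exact inv_nonneg.2 cc.b_pos.le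
      _ = cc.b⁻¹ ^ (j :: σ).length := by rw [List.length_cons, pow_succ']

lemma abs_wordMap_sub_rpow_le (σ : List (Fin cc.N)) {x y : ℝ} (hx : x ∈ Set.Icc (0:ℝ) 1)
    (hy : y ∈ Set.Icc (0:ℝ) 1) :
    |cc.wordMap σ x - cc.wordMap σ y| ^ cc.γ ≤ (cc.b ^ cc.γ)⁻¹ ^ σ.length := by
  have hb : 0 ≤ cc.b⁻¹ := inv_nonneg.2 cc.b_pos.le
  calc |cc.wordMap σ x - cc.wordMap σ y| ^ cc.γ ≤ (cc.b⁻¹ ^ σ.length) ^ cc.γ :=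
        Real.rpow_le_rpow (abs_nonneg _) (cc.abs_wordMap_sub_le σ hx hy) cc.hγ.1.le
    _ = (cc.b ^ cc.γ)⁻¹ ^ σ.length := by
        rw [← Real.rpow_pow_comm hb, Real.inv_rpow cc.b_pos.le]

lemma abs_deriv_wordMap_le_exp_mul (σ : List (Fin cc.N)) {x y : ℝ}
    (hx : x ∈ Set.Icc (0:ℝ) 1) (hy : y ∈ Set.Icc (0:ℝ) 1) :
    |deriv (cc.wordMap σ) x| ≤
      Real.exp (cc.c * ∑ k ∈ Finset.Ico 1 (σ.length + 1), (cc.b ^ cc.γ)⁻¹ ^ k) *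
        |deriv (cc.wordMap σ) y| := by
  induction σ with
  | nil => simp [wordMap]
  | cons j σ ih =>
    have hstep : |deriv (cc.φ j) (cc.wordMap σ x)| ≤
        Real.exp (cc.c * (cc.b ^ cc.γ)⁻¹ ^ (σ.length + 1)) *
          |deriv (cc.φ j) (cc.wordMap σ y)| := by
      refine (cc.abs_deriv_φ_le_exp_mul j (cc.wordMap_mem σ hx) (cc.wordMap_mem σ hy)).trans ?_
      gcongr
      · exact cc.hc.le
      · exact cc.abs_wordMap_sub_rpow_le (j :: σ) hx hy
    rw [cc.deriv_wordMap_cons j σ hx, cc.deriv_wordMap_cons j σ hy, abs_mul, abs_mul,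
      List.length_cons, Finset.sum_Ico_succ_top (Nat.le_add_left 1 _), mul_add, Real.exp_add]
    calc _ ≤ (Real.exp (cc.c * (cc.b ^ cc.γ)⁻¹ ^ (σ.length + 1)) *
            |deriv (cc.φ j) (cc.wordMap σ y)|) *
          (Real.exp (cc.c * ∑ k ∈ Finset.Ico 1 (σ.length + 1), (cc.b ^ cc.γ)⁻¹ ^ k) *
            |deriv (cc.wordMap σ) y|) := mul_le_mul hstep ih (abs_nonneg _) (by positivity)
      _ = _ := by ring

lemma abs_deriv_wordMap_le_xi_mul (σ : List (Fin cc.N)) {x y : ℝ}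
    (hx : x ∈ Set.Icc (0:ℝ) 1) (hy : y ∈ Set.Icc (0:ℝ) 1) :
    |deriv (cc.wordMap σ) x| ≤ cc.xi * |deriv (cc.wordMap σ) y| := by
  refine (cc.abs_deriv_wordMap_le_exp_mul σ hx hy).trans ?_
  gcongr
  rw [xi, div_eq_mul_inv]
  exact Real.exp_le_exp.2 (mul_le_mul_of_nonneg_left
    (sum_Ico_one_inv_pow_le cc.one_lt_b_rpow_γ _) cc.hc.le)

end CookieCutter

theorem deriv_comparable (cc : CookieCutter) :
    ∀ n : ℕ, 1 ≤ n → ∀ σ : List (Fin cc.N), σ.length = n →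
      ∀ x ∈ Set.Icc (0:ℝ) 1, ∀ y ∈ Set.Icc (0:ℝ) 1,
        cc.xi⁻¹ * |deriv (cc.wordMap σ) y| ≤ |deriv (cc.wordMap σ) x| ∧
        |deriv (cc.wordMap σ) x| ≤ cc.xi * |deriv (cc.wordMap σ) y| := by
  intro _ _ σ _ x hx y hy
  refine ⟨?_, cc.abs_deriv_wordMap_le_xi_mul σ hx hy⟩
  rw [inv_mul_le_iff₀ cc.xi_pos]
  exact cc.abs_deriv_wordMap_le_xi_mul σ hy hx
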